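/- The number of ascent sequences of length n avoiding 012 that have exactly k ascents is binomial(n, 2k). -/

import Mathlib

/-!
A 012-avoiding ascent sequence uses only the letters 0 and 1: a letter `≥ 2` at position `i`
forces an ascent `x < y` before `i`, and since `y ≤ 1` by induction, `x, y` and that letter form
a `012`. Conversely every binary word starting with 0 is a 012-avoiding ascent sequence. Binary
words `0 w` with `k` ascents, where `w` has length `m`, are counted by the recursion obtained by
splitting off the first letter of `w`, which is Pascal's rule for `(m + 1).choose (2 * k)` and
`(m + 1).choose (2 * k + 1)` (the latter counting words starting with 1).
-/

/-- Number of ascents (adjacent strict rises) in a list of naturals. -/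
def ascList (l : List ℕ) : ℕ :=
  (l.zip l.tail).countP (fun p => decide (p.1 < p.2))

/-- `l` is an ascent sequence: nonempty, starts with 0, and each later letter is at most
one more than the number of ascents in the preceding prefix. -/
def IsAscSeq (l : List ℕ) : Prop :=
  l ≠ [] ∧ l.getD 0 0 = 0 ∧
    ∀ i, 0 < i → i < l.length → l.getD i 0 ≤ ascList (l.take i) + 1

/-- A sequence contains the pattern 012. -/
def Contains012 (l : List ℕ) : Prop :=
  ∃ i j k, i < j ∧ j < k ∧ k < l.length ∧
    l.getD i 0 < l.getD j 0 ∧ l.getD j 0 < l.getD k 0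

@[simp]
lemma ascList_singleton (a : ℕ) : ascList [a] = 0 := rfl

lemma ascList_cons_cons (a b : ℕ) (t : List ℕ) :
    ascList (a :: b :: t) = (if a < b then 1 else 0) + ascList (b :: t) := by
  simp only [ascList, List.tail_cons, List.zip_cons_cons, List.countP_cons, decide_eq_true_eq]
  split_ifs <;> omega

lemma exists_getD_lt_getD_succ_of_ascList_pos {l : List ℕ} (h : 0 < ascList l) :
    ∃ a, a + 1 < l.length ∧ l.getD a 0 < l.getD (a + 1) 0 := by
  match l, h with
  | x :: y :: t, h =>
    by_cases hxy : x < y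
    · exact ⟨0, by simp, hxy⟩
    · rw [ascList_cons_cons, if_neg hxy, zero_add] at h
      obtain ⟨a, ha, hlt⟩ := exists_getD_lt_getD_succ_of_ascList_pos h
      exact ⟨a + 1, by simpa using ha, by simpa using hlt⟩

lemma List.getD_take_of_lt {α : Type*} (l : List α) (d : α) {i a : ℕ} (h : a < i) :
    (l.take i).getD a d = l.getD a d := by
  simp [List.getD_eq_getElem?_getD, List.getElem?_take_of_lt h]

lemma List.getD_le_of_forall_mem_le {l : List ℕ} {b : ℕ} (hl : ∀ x ∈ l, x ≤ b) (i : ℕ) :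
    l.getD i 0 ≤ b := by
  rw [List.getD_eq_getElem?_getD]
  cases h : l[i]? with
  | none => exact Nat.zero_le b
  | some x => exact hl x (List.mem_of_getElem? h)

lemma IsAscSeq.forall_mem_le_one {l : List ℕ} (hl : IsAscSeq l) (h012 : ¬ Contains012 l) :
    ∀ x ∈ l, x ≤ 1 := by
  suffices ∀ i, i < l.length → l.getD i 0 ≤ 1 by
    intro x hx
    obtain ⟨i, hi, rfl⟩ := List.getElem_of_mem hx
    simpa only [List.getD_eq_getElem _ _ hi] using this i hi
  intro i
  induction i using Nat.strong_induction_on with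
  | _ i ih =>
    intro hi
    rcases Nat.eq_zero_or_pos i with rfl | hpos
    · exact hl.2.1.trans_le zero_le_one
    by_contra! hbig
    have hasc : 0 < ascList (l.take i) := by have := hl.2.2 i hpos hi; omega
    obtain ⟨a, ha, hlt⟩ := exists_getD_lt_getD_succ_of_ascList_pos hasc
    rw [List.length_take] at ha
    rw [l.getD_take_of_lt 0 (by omega), l.getD_take_of_lt 0 (by omega)] at hlt
    have hnext : l.getD (a + 1) 0 ≤ 1 := ih (a + 1) (by omega) (by omega)
    exact h012 ⟨a, a + 1, i, by omega, by omega, hi, hlt, by omega⟩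

lemma isAscSeq_and_not_contains012_iff {l : List ℕ} :
    IsAscSeq l ∧ ¬ Contains012 l ↔ l.head? = some 0 ∧ ∀ x ∈ l, x ≤ 1 := by
  constructor
  · rintro ⟨hl, h012⟩
    refine ⟨?_, hl.forall_mem_le_one h012⟩
    obtain ⟨hne, hzero, -⟩ := hl
    rcases l with _ | ⟨a, w⟩
    · exact absurd rfl hne
    · simpa using hzero
  · rintro ⟨hhead, hbin⟩
    have hle := List.getD_le_of_forall_mem_le hbin
    refine ⟨⟨?_, ?_, fun i _ _ => (hle i).trans (Nat.le_add_left 1 _)⟩, ?_⟩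
    · rintro rfl
      simp at hhead
    · rcases l with _ | ⟨a, w⟩ <;> simp_all
    · rintro ⟨i, j, k, -, -, -, hij, hjk⟩
      have hj := hle j
      have hk := hle k
      omega

def binaryTails (j m k : ℕ) : Set (List ℕ) :=
  {w | w.length = m ∧ (∀ x ∈ w, x ≤ 1) ∧ ascList (j :: w) = k}

lemma cons_mem_image_cons {α : Type*} {a b : α} {w : List α} {s : Set (List α)} :
    b :: w ∈ List.cons a '' s ↔ b = a ∧ w ∈ s := by
  constructor
  · rintro ⟨v, hv, h⟩
    obtain ⟨rfl, rfl⟩ := List.cons_eq_cons.mp h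
    exact ⟨rfl, hv⟩
  · rintro ⟨rfl, hw⟩
    exact ⟨w, hw, rfl⟩

lemma disjoint_image_cons {α : Type*} {a b : α} (hab : a ≠ b) (s t : Set (List α)) :
    Disjoint (List.cons a '' s) (List.cons b '' t) := by
  rw [Set.disjoint_left]
  rintro _ ⟨v, -, rfl⟩ hmem
  exact hab (cons_mem_image_cons.mp hmem).1

lemma cons_mem_binaryTails_succ {j m k b : ℕ} {w : List ℕ} :
    b :: w ∈ binaryTails j (m + 1) k ↔
      b ≤ 1 ∧ w.length = m ∧ (∀ x ∈ w, x ≤ 1) ∧ (if j < b then 1 else 0) + ascList (b :: w) = k := by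
  simp only [binaryTails, Set.mem_ofPred_eq, List.length_cons, List.forall_mem_cons,
    ascList_cons_cons, Nat.add_right_cancel_iff, and_assoc, and_left_comm]

lemma binaryTails_zero (j k : ℕ) : binaryTails j 0 k = if k = 0 then {[]} else ∅ := by
  ext w
  rcases w with _ | ⟨b, w⟩ <;> split_ifs with hk <;> simp [binaryTails, hk, eq_comm]

lemma binaryTails_one_succ (m k : ℕ) :
    binaryTails 1 (m + 1) k = List.cons 0 '' binaryTails 0 m k ∪ List.cons 1 '' binaryTails 1 m k := by
  ext (_ | ⟨b, w⟩)
  · simp [binaryTails]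
  · rw [cons_mem_binaryTails_succ, Set.mem_union, cons_mem_image_cons, cons_mem_image_cons]
    obtain rfl | rfl | hb : b = 0 ∨ b = 1 ∨ 1 < b := by omega
    · simp [binaryTails]
    · simp [binaryTails]
    · simp [hb.not_ge, hb.ne', (zero_lt_one.trans hb).ne']

lemma binaryTails_zero_succ_zero (m : ℕ) :
    binaryTails 0 (m + 1) 0 = List.cons 0 '' binaryTails 0 m 0 := by
  ext (_ | ⟨b, w⟩)
  · simp [binaryTails]
  · rw [cons_mem_binaryTails_succ, cons_mem_image_cons]
    obtain rfl | rfl | hb : b = 0 ∨ b = 1 ∨ 1 < b := by omega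
    · simp [binaryTails]
    · simp
    · simp [hb.not_ge, (zero_lt_one.trans hb).ne']

lemma binaryTails_zero_succ_succ (m k : ℕ) :
    binaryTails 0 (m + 1) (k + 1) =
      List.cons 0 '' binaryTails 0 m (k + 1) ∪ List.cons 1 '' binaryTails 1 m k := by
  ext (_ | ⟨b, w⟩)
  · simp [binaryTails]
  · rw [cons_mem_binaryTails_succ, Set.mem_union, cons_mem_image_cons, cons_mem_image_cons]
    obtain rfl | rfl | hb : b = 0 ∨ b = 1 ∨ 1 < b := by omega
    · simp [binaryTails]
    · simp [binaryTails, add_comm 1]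
    · simp [hb.not_ge, hb.ne', (zero_lt_one.trans hb).ne']

lemma encard_binaryTails (m k : ℕ) :
    (binaryTails 0 m k).encard = (m + 1).choose (2 * k) ∧
      (binaryTails 1 m k).encard = (m + 1).choose (2 * k + 1) := by
  induction m generalizing k with
  | zero =>
    cases k with
    | zero => simp [binaryTails_zero]
    | succ k =>
      rw [binaryTails_zero, binaryTails_zero, if_neg k.succ_ne_zero,
        Nat.choose_eq_zero_of_lt (by omega), Nat.choose_eq_zero_of_lt (by omega)]
      simp
  | succ m ih =>
    have hdisj := disjoint_image_cons zero_ne_one (α := ℕ)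
    have hinj : ∀ a : ℕ, (List.cons a).Injective := fun _ => List.cons_injective
    refine ⟨?_, ?_⟩
    · cases k with
      | zero => simp [binaryTails_zero_succ_zero, (hinj 0).encard_image, (ih 0).1]
      | succ k =>
        rw [binaryTails_zero_succ_succ, Set.encard_union_eq (hdisj _ _), (hinj 0).encard_image,
          (hinj 1).encard_image, (ih (k + 1)).1, (ih k).2,
          show 2 * (k + 1) = 2 * k + 1 + 1 by ring, Nat.choose_succ_succ' (m + 1)]
        push_cast
        ring
    · rw [binaryTails_one_succ, Set.encard_union_eq (hdisj _ _), (hinj 0).encard_image,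
        (hinj 1).encard_image, (ih k).1, (ih k).2, Nat.choose_succ_succ' (m + 1)]
      push_cast
      rfl

lemma setOf_isAscSeq_not_contains012 (m k : ℕ) :
    {l : List ℕ | l.length = m + 1 ∧ IsAscSeq l ∧ ¬ Contains012 l ∧ ascList l = k} =
      List.cons 0 '' binaryTails 0 m k := by
  ext (_ | ⟨a, w⟩)
  · simp
  simp only [Set.mem_ofPred_eq, cons_mem_image_cons, binaryTails, List.length_cons,
    Nat.add_right_cancel_iff]
  constructor
  · rintro ⟨hlen, hasc, h012, hk⟩
    obtain ⟨hhead, hbin⟩ := isAscSeq_and_not_contains012_iff.mp ⟨hasc, h012⟩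
    obtain rfl : a = 0 := by simpa using hhead
    exact ⟨rfl, hlen, fun x hx => hbin x (List.mem_cons_of_mem 0 hx), hk⟩
  · rintro ⟨rfl, hlen, hbin, hk⟩
    obtain ⟨hasc, h012⟩ := isAscSeq_and_not_contains012_iff.mpr
      ⟨rfl, List.forall_mem_cons.mpr ⟨zero_le_one, hbin⟩⟩
    exact ⟨hlen, hasc, h012, hk⟩

/-- The number of 012-avoiding ascent sequences of length `n` with `k` ascents is
`n.choose (2k)`. -/
theorem stmt8 (n k : ℕ) (hn : 1 ≤ n) :
    {l : List ℕ | l.length = n ∧ IsAscSeq l ∧ ¬ Contains012 l ∧ ascList l = k}.ncard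
      = n.choose (2 * k) := by
  obtain ⟨m, rfl⟩ : ∃ m, n = m + 1 := ⟨n - 1, by omega⟩
  rw [setOf_isAscSeq_not_contains012, Set.ncard_image_of_injective _ List.cons_injective,
    Set.ncard_def, (encard_binaryTails m k).1, ENat.toNat_natCast]
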